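/- If an infinite word w over a finite alphabet has only finitely many weakly abelian unbordered factors, then w is balanced. -/

import Mathlib

def factor {α : Type*} (w : ℕ → α) (i n : ℕ) : List α :=
  (List.range n).map (fun k => w (i + k))

def IsFactor {α : Type*} (u : List α) (w : ℕ → α) : Prop :=
  ∃ i, factor w i u.length = u

def SameFreq {α : Type*} [DecidableEq α] (u v : List α) : Prop :=
  ∀ a : α, (u.count a : ℚ) / u.length = (v.count a : ℚ) / v.length

def WeaklyAbelianBordered {α : Type*} [DecidableEq α] (w : List α) : Prop :=
  ∃ p s : List α, p <+: w ∧ s <:+ w ∧ p ≠ [] ∧ p.length < w.length ∧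
    s ≠ [] ∧ s.length < w.length ∧ SameFreq p s

/-! Fix a letter `a` and let `f t` be the number of `a`'s among the first `t` letters of `w`;
`f` is a 1-Lipschitz path. If the path lies strictly below the chord from `i` to `j` at every
point strictly between them, every proper prefix of `w[i, j)` has a smaller `a`-frequency than
the whole factor, so every proper suffix has a larger one and the factor is weakly abelian
unbordered; likewise above the chord. Hence some `N` bounds the length of every chord that the
path does not meet from above, resp. from below. Replacing a chord by the sub-chord cut off at a
point above it only raises the chord, so descending to chords of length at most `N` shows that
the path stays within `N` of every chord, in particular of the straight line over `[0, T]`.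
Increments of length `n` of that line are all equal, which gives the bound `4 N`. -/

section Chords

variable {𝕜 : Type*} [Field 𝕜]

def chord (f : ℕ → 𝕜) (i j t : ℕ) : 𝕜 :=
  f i + (f j - f i) / ((j : 𝕜) - i) * ((t : 𝕜) - i)

lemma chord_neg (f : ℕ → 𝕜) (i j t : ℕ) : chord (-f) i j t = -chord f i j t := by
  simp only [chord, Pi.neg_apply]
  ring

lemma chord_sub_chord_right (f : ℕ → 𝕜) {i s j : ℕ} (hij : (i : 𝕜) ≠ j) (hsj : (s : 𝕜) ≠ j)
    (t : ℕ) :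
    chord f s j t - chord f i j t = (f s - chord f i j s) * ((j - t) / (j - s)) := by
  have hij' : (j : 𝕜) - i ≠ 0 := sub_ne_zero.mpr hij.symm
  have hsj' : (j : 𝕜) - s ≠ 0 := sub_ne_zero.mpr hsj.symm
  simp only [chord]
  field_simp
  ring

lemma chord_sub_chord_left (f : ℕ → 𝕜) {i s j : ℕ} (hij : (i : 𝕜) ≠ j) (his : (i : 𝕜) ≠ s)
    (t : ℕ) :
    chord f i s t - chord f i j t = (f s - chord f i j s) * ((t - i) / (s - i)) := by
  have hij' : (j : 𝕜) - i ≠ 0 := sub_ne_zero.mpr hij.symm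
  have his' : (s : 𝕜) - i ≠ 0 := sub_ne_zero.mpr his.symm
  simp only [chord]
  field_simp
  ring

variable [LinearOrder 𝕜] [IsStrictOrderedRing 𝕜]

lemma chord_le_max {f : ℕ → 𝕜} {i j t : ℕ} (hit : i ≤ t) (htj : t ≤ j) :
    chord f i j t ≤ max (f i) (f j) := by
  set θ := ((t : 𝕜) - i) / ((j : 𝕜) - i)
  have hit' : (i : 𝕜) ≤ t := by exact_mod_cast hit
  have htj' : (t : 𝕜) ≤ j := by exact_mod_cast htj
  have hθ0 : 0 ≤ θ := div_nonneg (by linarith) (by linarith)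
  have hθ1 : θ ≤ 1 := div_le_one_of_le₀ (by linarith) (by linarith)
  have hcombo : chord f i j t = (1 - θ) • f i + θ • f j := by
    simp only [chord, smul_eq_mul, θ]
    ring
  rw [hcombo]
  exact Convex.combo_le_max _ _ (sub_nonneg.mpr hθ1) hθ0 (sub_add_cancel 1 θ)

lemma chord_le_chord_right {f : ℕ → 𝕜} {i s j t : ℕ} (his : i < s) (hsj : s < j)
    (hs : chord f i j s ≤ f s) (htj : t ≤ j) :
    chord f i j t ≤ chord f s j t := by
  have hsj' : (s : 𝕜) < j := by exact_mod_cast hsj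
  rw [← sub_nonneg, chord_sub_chord_right f (by exact_mod_cast (his.trans hsj).ne) hsj'.ne]
  exact mul_nonneg (sub_nonneg.mpr hs)
    (div_nonneg (sub_nonneg.mpr (by exact_mod_cast htj)) (sub_pos.mpr hsj').le)

lemma chord_le_chord_left {f : ℕ → 𝕜} {i s j t : ℕ} (his : i < s) (hsj : s < j)
    (hs : chord f i j s ≤ f s) (hit : i ≤ t) :
    chord f i j t ≤ chord f i s t := by
  have his' : (i : 𝕜) < s := by exact_mod_cast his
  rw [← sub_nonneg, chord_sub_chord_left f (by exact_mod_cast (his.trans hsj).ne) his'.ne]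
  exact mul_nonneg (sub_nonneg.mpr hs)
    (div_nonneg (sub_nonneg.mpr (by exact_mod_cast hit)) (sub_pos.mpr his').le)

lemma chord_le_add_of_exists_chord_le {f : ℕ → 𝕜} (N : ℕ)
    (hlip : ∀ s t, |f s - f t| ≤ |(s : 𝕜) - t|)
    (habove : ∀ i j, i + N < j → ∃ s, i < s ∧ s < j ∧ chord f i j s ≤ f s)
    {i j t : ℕ} (hit : i ≤ t) (htj : t ≤ j) :
    chord f i j t ≤ f t + N := by
  induction hd : j - i using Nat.strong_induction_on generalizing i j with
  | _ d ih =>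
  by_cases hshort : j ≤ i + N
  · have hnear : ∀ s, i ≤ s → s ≤ j → f s ≤ f t + N := by
      intro s his hsj
      have hdist : |(s : ℤ) - t| ≤ N := abs_sub_le_iff.mpr ⟨by omega, by omega⟩
      have hdist' : |(s : 𝕜) - t| ≤ N := by exact_mod_cast hdist
      linarith [(abs_le.mp (hlip s t)).2]
    exact (chord_le_max hit htj).trans
      (max_le (hnear i le_rfl (hit.trans htj)) (hnear j (hit.trans htj) le_rfl))
  · obtain ⟨s, his, hsj, hs⟩ := habove i j (by omega)
    rcases le_total s t with hst | hts
    · exact (chord_le_chord_right his hsj hs htj).trans (ih (j - s) (by omega) hst htj rfl)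
    · exact (chord_le_chord_left his hsj hs hit).trans (ih (s - i) (by omega) hit hts rfl)

lemma abs_sub_chord_le {f : ℕ → 𝕜} (N : ℕ)
    (hlip : ∀ s t, |f s - f t| ≤ |(s : 𝕜) - t|)
    (habove : ∀ i j, i + N < j → ∃ s, i < s ∧ s < j ∧ chord f i j s ≤ f s)
    (hbelow : ∀ i j, i + N < j → ∃ s, i < s ∧ s < j ∧ f s ≤ chord f i j s)
    {i j t : ℕ} (hit : i ≤ t) (htj : t ≤ j) :
    |f t - chord f i j t| ≤ N := by
  have hlip_neg : ∀ s t, |(-f) s - (-f) t| ≤ |(s : 𝕜) - t| := fun s t => by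
    rw [Pi.neg_apply, Pi.neg_apply, neg_sub_neg, abs_sub_comm]
    exact hlip s t
  have habove_neg : ∀ i j, i + N < j → ∃ s, i < s ∧ s < j ∧ chord (-f) i j s ≤ (-f) s := by
    simpa [chord_neg] using hbelow
  have hup := chord_le_add_of_exists_chord_le N hlip habove hit htj
  have hdown := chord_le_add_of_exists_chord_le N hlip_neg habove_neg hit htj
  rw [chord_neg, Pi.neg_apply] at hdown
  rw [abs_le]
  constructor <;> linarith

lemma abs_increment_sub_le {f : ℕ → 𝕜} (N : ℕ)
    (hlip : ∀ s t, |f s - f t| ≤ |(s : 𝕜) - t|)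
    (habove : ∀ i j, i + N < j → ∃ s, i < s ∧ s < j ∧ chord f i j s ≤ f s)
    (hbelow : ∀ i j, i + N < j → ∃ s, i < s ∧ s < j ∧ f s ≤ chord f i j s) (i j n : ℕ) :
    |(f (i + n) - f i) - (f (j + n) - f j)| ≤ 4 * N := by
  set T := max (i + n) (j + n)
  have hnear : ∀ t ≤ T, |f t - chord f 0 T t| ≤ N := fun t ht =>
    abs_sub_chord_le N hlip habove hbelow (Nat.zero_le t) ht
  have hslope : chord f 0 T (i + n) - chord f 0 T i = chord f 0 T (j + n) - chord f 0 T j := by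
    simp only [chord]
    push_cast
    ring
  have h1 := abs_le.mp (hnear i (by omega))
  have h2 := abs_le.mp (hnear (i + n) (by omega))
  have h3 := abs_le.mp (hnear j (by omega))
  have h4 := abs_le.mp (hnear (j + n) (by omega))
  rw [abs_le]
  constructor <;> linarith

end Chords

section Words

variable {α : Type*}
lemma factor_length (w : ℕ → α) (i n : ℕ) : (factor w i n).length = n := by
  simp [factor]

lemma factor_add (w : ℕ → α) (i m n : ℕ) :
    factor w i (m + n) = factor w i m ++ factor w (i + m) n := by
  simp [factor, List.range_add, Nat.add_assoc]

lemma factor_take (w : ℕ → α) (i : ℕ) {k n : ℕ} (h : k ≤ n) :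
    (factor w i n).take k = factor w i k := by
  rw [factor, factor, ← List.map_take, List.take_range, Nat.min_eq_left h]

variable [DecidableEq α]

def letterFreq (a : α) (u : List α) : ℚ := u.count a / u.length

lemma letterFreq_mul_length (a : α) (u : List α) : letterFreq a u * u.length = u.count a := by
  unfold letterFreq
  by_cases hu : u = []
  · simp [hu]
  · have : (u.length : ℚ) ≠ 0 := by simpa using hu
    field_simp

lemma letterFreq_append_mul (a : α) (p s : List α) :
    letterFreq a (p ++ s) * (p.length + s.length)
      = letterFreq a p * p.length + letterFreq a s * s.length := by
  have := letterFreq_mul_length a (p ++ s)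
  rw [List.length_append, List.count_append] at this
  push_cast at this
  rw [letterFreq_mul_length, letterFreq_mul_length, ← this]

lemma letterFreq_append_lt {a : α} {p s : List α} (hp : p ≠ []) (hs : s ≠ [])
    (h : letterFreq a p < letterFreq a (p ++ s)) : letterFreq a (p ++ s) < letterFreq a s := by
  have hp' : (0 : ℚ) < p.length := by simpa [List.length_pos_iff] using hp
  have hs' : (0 : ℚ) < s.length := by simpa [List.length_pos_iff] using hs
  by_contra! hle
  nlinarith [letterFreq_append_mul a p s, mul_lt_mul_of_pos_right h hp',
    mul_le_mul_of_nonneg_right hle hs'.le]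

lemma letterFreq_lt_append {a : α} {p s : List α} (hp : p ≠ []) (hs : s ≠ [])
    (h : letterFreq a (p ++ s) < letterFreq a p) : letterFreq a s < letterFreq a (p ++ s) := by
  have hp' : (0 : ℚ) < p.length := by simpa [List.length_pos_iff] using hp
  have hs' : (0 : ℚ) < s.length := by simpa [List.length_pos_iff] using hs
  by_contra! hle
  nlinarith [letterFreq_append_mul a p s, mul_lt_mul_of_pos_right h hp',
    mul_le_mul_of_nonneg_right hle hs'.le]

lemma WeaklyAbelianBordered.exists_take_drop {u : List α} (h : WeaklyAbelianBordered u) :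
    ∃ k m, 0 < k ∧ k < u.length ∧ 0 < m ∧ m < u.length ∧
      ∀ a, letterFreq a (u.take k) = letterFreq a (u.drop m) := by
  obtain ⟨p, s, hp, hs, hp0, hpu, hs0, hsu, hfreq⟩ := h
  refine ⟨p.length, u.length - s.length, List.length_pos_iff.mpr hp0, hpu, by omega, ?_, ?_⟩
  · have := List.length_pos_iff.mpr hs0
    omega
  · rw [← List.prefix_iff_eq_take.mp hp, ← List.suffix_iff_eq_drop.mp hs]
    exact hfreq

lemma not_weaklyAbelianBordered_of_letterFreq_take_lt {u : List α} (a : α)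
    (h : ∀ k, 0 < k → k < u.length → letterFreq a (u.take k) < letterFreq a u) :
    ¬ WeaklyAbelianBordered u := by
  intro hu
  obtain ⟨k, m, hk0, hku, hm0, hmu, hfreq⟩ := hu.exists_take_drop
  have hdrop : letterFreq a u < letterFreq a (u.drop m) := by
    have := letterFreq_append_lt (a := a) (p := u.take m) (s := u.drop m)
      (List.ne_nil_of_length_pos (by simp; omega)) (List.ne_nil_of_length_pos (by simp; omega))
    rw [List.take_append_drop] at this
    exact this (h m hm0 hmu)
  exact (h k hk0 hku).not_ge (hfreq a ▸ hdrop.le)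

lemma not_weaklyAbelianBordered_of_lt_letterFreq_take {u : List α} (a : α)
    (h : ∀ k, 0 < k → k < u.length → letterFreq a u < letterFreq a (u.take k)) :
    ¬ WeaklyAbelianBordered u := by
  intro hu
  obtain ⟨k, m, hk0, hku, hm0, hmu, hfreq⟩ := hu.exists_take_drop
  have hdrop : letterFreq a (u.drop m) < letterFreq a u := by
    have := letterFreq_lt_append (a := a) (p := u.take m) (s := u.drop m)
      (List.ne_nil_of_length_pos (by simp; omega)) (List.ne_nil_of_length_pos (by simp; omega))
    rw [List.take_append_drop] at this
    exact this (h m hm0 hmu)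
  exact (h k hk0 hku).not_ge (hfreq a ▸ hdrop.le)

def prefixCount (w : ℕ → α) (a : α) (t : ℕ) : ℚ := (factor w 0 t).count a

lemma count_factor (w : ℕ → α) (a : α) (i n : ℕ) :
    ((factor w i n).count a : ℚ) = prefixCount w a (i + n) - prefixCount w a i := by
  rw [prefixCount, prefixCount, factor_add w 0 i n, List.count_append, zero_add]
  push_cast
  ring

lemma abs_prefixCount_sub_le (w : ℕ → α) (a : α) (s t : ℕ) :
    |prefixCount w a s - prefixCount w a t| ≤ |(s : ℚ) - t| := by
  wlog hst : s ≤ t generalizing s t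
  · rw [abs_sub_comm, abs_sub_comm (s : ℚ)]
    exact this t s (le_of_not_ge hst)
  obtain ⟨n, rfl⟩ := Nat.exists_eq_add_of_le hst
  have hcount : (factor w s n).count a ≤ n := List.count_le_length.trans_eq (factor_length w s n)
  rw [abs_sub_comm, ← count_factor, abs_sub_comm]
  push_cast
  rw [add_sub_cancel_left, abs_of_nonneg (Nat.cast_nonneg _), Nat.abs_cast]
  exact_mod_cast hcount

lemma letterFreq_factor (w : ℕ → α) (a : α) (i n : ℕ) :
    letterFreq a (factor w i n) = (prefixCount w a (i + n) - prefixCount w a i) / n := by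
  rw [letterFreq, count_factor, factor_length]

lemma not_weaklyAbelianBordered_factor_of_lt_chord {w : ℕ → α} {a : α} {i n : ℕ}
    (h : ∀ s, i < s → s < i + n →
      prefixCount w a s < chord (prefixCount w a) i (i + n) s) :
    ¬ WeaklyAbelianBordered (factor w i n) := by
  apply not_weaklyAbelianBordered_of_letterFreq_take_lt a
  intro k hk hkn
  rw [factor_length] at hkn
  have hk' : (0 : ℚ) < k := by exact_mod_cast hk
  have hn' : (0 : ℚ) < n := by exact_mod_cast hk.trans hkn
  have hlt := h (i + k) (by omega) (by omega)
  simp only [chord, Nat.cast_add, add_sub_cancel_left] at hlt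
  rw [factor_take w i hkn.le, letterFreq_factor, letterFreq_factor, div_lt_div_iff₀ hk' hn']
  rw [div_mul_eq_mul_div, ← sub_lt_iff_lt_add', lt_div_iff₀ hn'] at hlt
  linarith

lemma not_weaklyAbelianBordered_factor_of_chord_lt {w : ℕ → α} {a : α} {i n : ℕ}
    (h : ∀ s, i < s → s < i + n →
      chord (prefixCount w a) i (i + n) s < prefixCount w a s) :
    ¬ WeaklyAbelianBordered (factor w i n) := by
  apply not_weaklyAbelianBordered_of_lt_letterFreq_take a
  intro k hk hkn
  rw [factor_length] at hkn
  have hk' : (0 : ℚ) < k := by exact_mod_cast hk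
  have hn' : (0 : ℚ) < n := by exact_mod_cast hk.trans hkn
  have hlt := h (i + k) (by omega) (by omega)
  simp only [chord, Nat.cast_add, add_sub_cancel_left] at hlt
  rw [factor_take w i hkn.le, letterFreq_factor, letterFreq_factor, div_lt_div_iff₀ hn' hk']
  rw [div_mul_eq_mul_div, ← lt_sub_iff_add_lt', div_lt_iff₀ hn'] at hlt
  linarith

variable {w : ℕ → α} {N : ℕ}

lemma exists_chord_le_prefixCount (a : α)
    (hN : ∀ u, IsFactor u w → ¬ WeaklyAbelianBordered u → u.length ≤ N) {i j : ℕ}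
    (hij : i + N < j) :
    ∃ s, i < s ∧ s < j ∧ chord (prefixCount w a) i j s ≤ prefixCount w a s := by
  obtain ⟨n, rfl⟩ : ∃ n, j = i + n := ⟨j - i, by omega⟩
  by_contra! hlt
  have := hN _ ⟨i, by rw [factor_length]⟩ (not_weaklyAbelianBordered_factor_of_lt_chord hlt)
  rw [factor_length] at this
  omega

lemma exists_prefixCount_le_chord (a : α)
    (hN : ∀ u, IsFactor u w → ¬ WeaklyAbelianBordered u → u.length ≤ N) {i j : ℕ}
    (hij : i + N < j) :
    ∃ s, i < s ∧ s < j ∧ prefixCount w a s ≤ chord (prefixCount w a) i j s := by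
  obtain ⟨n, rfl⟩ : ∃ n, j = i + n := ⟨j - i, by omega⟩
  by_contra! hlt
  have := hN _ ⟨i, by rw [factor_length]⟩ (not_weaklyAbelianBordered_factor_of_chord_lt hlt)
  rw [factor_length] at this
  omega

end Words

theorem stmt_11_general {α : Type*} [DecidableEq α] (w : ℕ → α)
    (h : {u : List α | IsFactor u w ∧ ¬ WeaklyAbelianBordered u}.Finite) :
    ∃ K : ℕ, ∀ (a : α) (i j n : ℕ),
      |((factor w i n).count a : ℤ) - ((factor w j n).count a : ℤ)| ≤ K := by
  obtain ⟨N, hN⟩ := (h.image List.length).bddAbove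
  have hlen : ∀ u, IsFactor u w → ¬ WeaklyAbelianBordered u → u.length ≤ N :=
    fun u hu hu' => hN ⟨u, ⟨hu, hu'⟩, rfl⟩
  refine ⟨4 * N, fun a i j n => ?_⟩
  have hbound := abs_increment_sub_le N (abs_prefixCount_sub_le w a)
    (fun _ _ => exists_chord_le_prefixCount a hlen)
    (fun _ _ => exists_prefixCount_le_chord a hlen) i j n
  rw [← count_factor, ← count_factor] at hbound
  exact_mod_cast hbound

/-- If an infinite word over a finite alphabet has only finitely many weakly abelian
unbordered factors, then it is balanced. -/
theorem stmt_11 {α : Type*} [DecidableEq α] [Fintype α] (w : ℕ → α)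
    (h : {u : List α | IsFactor u w ∧ ¬ WeaklyAbelianBordered u}.Finite) :
    ∃ K : ℕ, ∀ (a : α) (i j n : ℕ),
      |((factor w i n).count a : ℤ) - ((factor w j n).count a : ℤ)| ≤ K :=
  stmt_11_general w h
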